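/- arXiv:2107.03459 — 3 statements merged into one kernel-verified Lean document; each statement's English description precedes it below -/
import Mathlib

section
/- If ≤ is a linear extension of ≼_I, then there exists an injective x : {1,…,p} → ℝ with x(j) ∈ I_j for all j such that for all j₁, j₂, j₁ ≤ j₂ holds iff x(j₁) ≤ x(j₂). -/
/-!
If `a ≤ b` in a linear extension of the interval order, then `ℓ a < r b`: otherwise the distinct
endpoints give `r b < ℓ a`, i.e. `b ≺ a`, and antisymmetry forces `a = b`. Hence the running
maximum `m a` of the left endpoints over `{i | i ≤ a}` is monotone and satisfies
`ℓ a ≤ m a < r a`. Adding `ε` times the rank of `a`, for `ε > 0` small enough, makes it strictly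
monotone while keeping it inside `[ℓ a, r a]`; a strictly monotone map reflects the order.
-/

open Filter Topology Set

variable {α : Type*}

noncomputable abbrev linearOrderOfIsLinearOrder (r : α → α → Prop) [IsLinearOrder α r] :
    LinearOrder α where
  le := r
  le_refl := refl_of r
  le_trans _ _ _ := trans_of r
  le_antisymm _ _ := antisymm_of r
  le_total := total_of r
  toDecidableLE := Classical.decRel r

section LinearOrder

variable [LinearOrder α]

theorem left_lt_right_of_le {ℓ r : α → ℝ} (hlr : ∀ a, ℓ a < r a) (hne : ∀ a b, ℓ a ≠ r b)
    (hext : ∀ a b, r a < ℓ b → a ≤ b) {a b : α} (hab : a ≤ b) : ℓ a < r b := by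
  by_contra! hba
  have hba : r b < ℓ a := hba.lt_of_ne (hne a b).symm
  obtain rfl : a = b := le_antisymm hab (hext b a hba)
  exact (hlr a).not_gt hba

variable [Fintype α]

theorem exists_strictMono_between_of_monotone {f g : α → ℝ} (hf : Monotone f)
    (hfg : ∀ a, f a < g a) : ∃ x : α → ℝ, StrictMono x ∧ ∀ a, f a ≤ x a ∧ x a < g a := by
  let rank : α → ℕ := fun a => (monoEquivOfFin α rfl).symm a
  have hrank : StrictMono rank := Fin.val_strictMono.comp (monoEquivOfFin α rfl).symm.strictMono
  have hsmall : ∀ᶠ ε in 𝓝 (0 : ℝ), ∀ a, f a + ε * rank a < g a :=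
    eventually_all.2 fun a => ContinuousAt.eventually_lt (by fun_prop) continuousAt_const
      (by simpa using hfg a)
  obtain ⟨ε, hε, hεpos⟩ := ((hsmall.filter_mono nhdsWithin_le_nhds).and (self_mem_nhdsWithin (s := Ioi 0))).exists
  refine ⟨fun a => f a + ε * rank a, hf.add_strictMono ?_, fun a => ⟨?_, hε a⟩⟩
  · exact fun a b hab => mul_lt_mul_of_pos_left (Nat.cast_lt.2 (hrank hab)) hεpos
  · exact le_add_of_nonneg_right (mul_nonneg (le_of_lt hεpos) (Nat.cast_nonneg _))

theorem exists_strictMono_mem_Icc_of_left_lt_right {ℓ r : α → ℝ}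
    (h : ∀ a b, a ≤ b → ℓ a < r b) : ∃ x : α → ℝ, StrictMono x ∧ ∀ a, x a ∈ Icc (ℓ a) (r a) := by
  let m : α → ℝ := fun a => (Finset.univ.filter (· ≤ a)).sup' ⟨a, by simp⟩ ℓ
  have hm_mono : Monotone m := fun a b hab =>
    Finset.sup'_mono ℓ (fun i hi => by simp_all [le_trans _ hab]) _
  have hm_lt : ∀ a, m a < r a := fun a =>
    (Finset.sup'_lt_iff _).2 fun i hi => h i a (Finset.mem_filter.1 hi).2
  obtain ⟨x, hx, hmx⟩ := exists_strictMono_between_of_monotone hm_mono hm_lt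
  refine ⟨x, hx, fun a => ⟨le_trans ?_ (hmx a).1, (hmx a).2.le⟩⟩
  exact Finset.le_sup' ℓ (by simp)

end LinearOrder

theorem linear_extension_gives_compatible_points_general (p : ℕ)
    (ℓ r : Fin p → ℝ) (hlr : ∀ j, ℓ j < r j)
    (hdist : Function.Injective (Sum.elim ℓ r : Fin p ⊕ Fin p → ℝ))
    (le : Fin p → Fin p → Prop) (hlin : IsLinearOrder (Fin p) le)
    (hext : ∀ j₁ j₂ : Fin p, (r j₁ < ℓ j₂ ∨ j₁ = j₂) → le j₁ j₂) :
    ∃ x : Fin p → ℝ, Function.Injective x ∧ (∀ j, x j ∈ Set.Icc (ℓ j) (r j)) ∧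
      ∀ j₁ j₂ : Fin p, le j₁ j₂ ↔ x j₁ ≤ x j₂ := by
  let := linearOrderOfIsLinearOrder le
  have hne : ∀ a b, ℓ a ≠ r b := fun a b h => Sum.inl_ne_inr (hdist h)
  obtain ⟨x, hx, hmem⟩ := exists_strictMono_mem_Icc_of_left_lt_right
    fun a b => left_lt_right_of_le hlr hne fun a b h => hext a b (.inl h)
  exact ⟨x, hx.injective, hmem, fun _ _ => hx.le_iff_le.symm⟩

/-- If `≤` is a linear extension of `≼_I` (intervals `I_j = [ℓ j, r j]` with
`ℓ j < r j` and 2p pairwise distinct endpoints), then there exists an injective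
`x : {1,…,p} → ℝ` with `x j ∈ I_j` for all `j` such that `j₁ ≤ j₂ ↔ x j₁ ≤ x j₂`. -/
theorem linear_extension_gives_compatible_points (p : ℕ) (hp : 1 ≤ p)
    (ℓ r : Fin p → ℝ) (hlr : ∀ j, ℓ j < r j)
    (hdist : Function.Injective (Sum.elim ℓ r : Fin p ⊕ Fin p → ℝ))
    (le : Fin p → Fin p → Prop) (hlin : IsLinearOrder (Fin p) le)
    (hext : ∀ j₁ j₂ : Fin p, (r j₁ < ℓ j₂ ∨ j₁ = j₂) → le j₁ j₂) :
    ∃ x : Fin p → ℝ, Function.Injective x ∧ (∀ j, x j ∈ Set.Icc (ℓ j) (r j)) ∧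
      ∀ j₁ j₂ : Fin p, le j₁ j₂ ↔ x j₁ ≤ x j₂ :=
  linear_extension_gives_compatible_points_general p ℓ r hlr hdist le hlin hext
end

section
/- A bijective ranking ρ : {1,…,p} → {1,…,p} is compatible with the intervals I_1,…,I_p if and only if the linear order ≤_ρ defined by j₁ ≤_ρ j₂ iff ρ(j₁) ≤ ρ(j₂) is a linear extension of ≼_I. -/
/-!
A compatible placement orders the points by rank, and a point of an interval lying entirely to
the left of another one is smaller, so ranks extend `≺_I`.

Conversely, if `ρ` extends `≺_I`, distinctness of the endpoints gives `ℓ i < r j` whenever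
`ρ i ≤ ρ j`. Hence the largest left endpoint `L j` among intervals of rank at most `ρ j` lies
below the smallest right endpoint `U j` among those of rank at least `ρ j`, and both envelopes
grow with the rank. The point `L j + ρ j / (ρ j + 1) * (U j - L j)` therefore lies in `I_j` and
is strictly increasing in the rank, so its rank among the points is exactly `ρ j + 1`.
-/

open Finset

section Envelopes

variable {ι : Type*} [Fintype ι] (ρ : ι → ℕ)

noncomputable def lowerEnvelope (a : ι → ℝ) (j : ι) : ℝ :=
  ({i | ρ i ≤ ρ j} : Finset ι).sup' ⟨j, by simp⟩ a

noncomputable def upperEnvelope (b : ι → ℝ) (j : ι) : ℝ :=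
  ({i | ρ j ≤ ρ i} : Finset ι).inf' ⟨j, by simp⟩ b

variable {ρ}

lemma le_lowerEnvelope (a : ι → ℝ) (j : ι) : a j ≤ lowerEnvelope ρ a j :=
  le_sup' a (by simp)

lemma upperEnvelope_le (b : ι → ℝ) (j : ι) : upperEnvelope ρ b j ≤ b j :=
  inf'_le b (by simp)

lemma lowerEnvelope_mono (a : ι → ℝ) {i j : ι} (h : ρ i ≤ ρ j) :
    lowerEnvelope ρ a i ≤ lowerEnvelope ρ a j :=
  sup'_le _ _ fun k hk => le_sup' a (by simp_all; omega)

lemma upperEnvelope_mono (b : ι → ℝ) {i j : ι} (h : ρ i ≤ ρ j) :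
    upperEnvelope ρ b i ≤ upperEnvelope ρ b j :=
  le_inf' _ _ fun k hk => inf'_le b (by simp_all; omega)

lemma lowerEnvelope_lt_upperEnvelope {a b : ι → ℝ} (hab : ∀ i j, ρ i ≤ ρ j → a i < b j)
    (j : ι) : lowerEnvelope ρ a j < upperEnvelope ρ b j :=
  (sup'_lt_iff _).2 fun i hi => (lt_inf'_iff _).2 fun k hk =>
    hab i k ((mem_filter.1 hi).2.trans (mem_filter.1 hk).2)

end Envelopes

lemma add_mul_sub_lt_add_mul_sub {A A' B B' s t : ℝ} (hA : A ≤ A') (hB : B ≤ B') (hAB : A < B)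
    (hs : 0 ≤ s) (hst : s < t) (ht : t ≤ 1) : A + s * (B - A) < A' + t * (B' - A') := by
  nlinarith

section Ranking

variable {ι : Type*}

lemma le_iff_le_of_lt_imp_lt {α β : Type*} [LinearOrder α] [LinearOrder β] {ρ : ι → α}
    {x : ι → β} (hρ : Function.Injective ρ) (hx : ∀ i j, ρ i < ρ j → x i < x j) (i j : ι) :
    x i ≤ x j ↔ ρ i ≤ ρ j := by
  refine ⟨fun h => le_of_not_gt fun hji => (hx j i hji).not_ge h, fun h => ?_⟩
  rcases h.lt_or_eq with h | h
  · exact (hx i j h).le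
  · rw [hρ h]

lemma rank_le_rank_of_le [Finite ι] {ρ : ι → ℕ} {x : ι → ℝ}
    (hrank : ∀ j, ρ j + 1 = {i | x i ≤ x j}.ncard) {i j : ι} (h : x i ≤ x j) : ρ i ≤ ρ j := by
  have : {k | x k ≤ x i}.ncard ≤ {k | x k ≤ x j}.ncard :=
    Set.ncard_le_ncard (fun k hk => le_trans hk h) (Set.toFinite _)
  have := hrank i ▸ hrank j ▸ this
  omega

lemma ncard_setOf_apply_le {p : ℕ} {ρ : Fin p → Fin p} (hρ : Function.Bijective ρ) (k : Fin p) :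
    {i | ρ i ≤ k}.ncard = k + 1 := by
  change (ρ ⁻¹' Set.Iic k).ncard = k + 1
  rw [Set.ncard_preimage_of_injective_subset_range hρ.1 (by simp [hρ.2.range_eq]),
    ← Finset.coe_Iic, Set.ncard_coe_finset, Fin.card_Iic]

lemma left_lt_right_of_rank_le {α : Type*} [LinearOrder α] {ρ : ι → α} (hρ : Function.Injective ρ)
    {ℓ r : ι → ℝ} (hlr : ∀ j, ℓ j < r j) (hdist : Function.Injective (Sum.elim ℓ r))
    (hext : ∀ i j, r i < ℓ j → ρ i ≤ ρ j) {i j : ι} (h : ρ i ≤ ρ j) : ℓ i < r j := by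
  rcases eq_or_ne i j with rfl | hij
  · exact hlr i
  have hne : ℓ i ≠ r j := fun heq => Sum.inl_ne_inr (hdist (a₁ := .inl i) (a₂ := .inr j) heq)
  exact lt_of_le_of_ne (le_of_not_gt fun hji => hij (hρ (h.antisymm (hext j i hji)))) hne

variable [Fintype ι] {ρ : ι → ℕ}

lemma exists_mem_Icc_lt_of_rank_lt {a b : ι → ℝ} (hab : ∀ i j, ρ i ≤ ρ j → a i < b j) :
    ∃ x : ι → ℝ, (∀ i j, ρ i < ρ j → x i < x j) ∧ ∀ j, x j ∈ Set.Icc (a j) (b j) := by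
  set L := lowerEnvelope ρ a
  set U := upperEnvelope ρ b
  set δ : ℕ → ℝ := fun k => k / (k + 1)
  have hδ₀ (k : ℕ) : 0 ≤ δ k := by positivity
  have hδ₁ (k : ℕ) : δ k ≤ 1 := by
    simp only [δ]; rw [div_le_one (by positivity)]; linarith
  have hδ : StrictMono δ := fun k m h => by
    simp only [δ]; rw [div_lt_div_iff₀ (by positivity) (by positivity)]
    have : (k : ℝ) < m := by exact_mod_cast h
    linarith
  have hLU := lowerEnvelope_lt_upperEnvelope hab
  refine ⟨fun j => L j + δ (ρ j) * (U j - L j), fun i j h => ?_, fun j => ⟨?_, ?_⟩⟩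
  · exact add_mul_sub_lt_add_mul_sub (lowerEnvelope_mono a h.le) (upperEnvelope_mono b h.le)
      (hLU i) (hδ₀ _) (hδ h) (hδ₁ _)
  · have := le_lowerEnvelope (ρ := ρ) a j
    nlinarith [hδ₀ (ρ j), hLU j]
  · have := upperEnvelope_le (ρ := ρ) b j
    nlinarith [hδ₁ (ρ j), hLU j]

end Ranking

theorem ranking_compatible_iff_linear_extension_general (p : ℕ)
    (ℓ r : Fin p → ℝ) (hlr : ∀ j, ℓ j < r j)
    (hdist : Function.Injective (Sum.elim ℓ r : Fin p ⊕ Fin p → ℝ))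
    (ρ : Fin p → Fin p) (hρ : Function.Bijective ρ) :
    (∃ x : Fin p → ℝ, Function.Injective x ∧ (∀ j, x j ∈ Set.Icc (ℓ j) (r j)) ∧
        ∀ j : Fin p, (ρ j : ℕ) + 1 = {i : Fin p | x i ≤ x j}.ncard) ↔
      (∀ j₁ j₂ : Fin p, (r j₁ < ℓ j₂ ∨ j₁ = j₂) → ρ j₁ ≤ ρ j₂) := by
  constructor
  · rintro ⟨x, -, hx, hrank⟩ j₁ j₂ (h | rfl)
    · exact rank_le_rank_of_le hrank ((hx j₁).2.trans (h.le.trans (hx j₂).1))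
    · exact le_rfl
  · intro hext
    have hsep : ∀ i j, (ρ i : ℕ) ≤ ρ j → ℓ i < r j := fun i j =>
      left_lt_right_of_rank_le hρ.1 hlr hdist fun i j h => hext i j (.inl h)
    obtain ⟨x, hxρ, hx⟩ := exists_mem_Icc_lt_of_rank_lt hsep
    have hle := le_iff_le_of_lt_imp_lt hρ.1 hxρ
    refine ⟨x, fun i j h => hρ.1 (le_antisymm ?_ ?_), hx, fun j => ?_⟩
    · exact (hle i j).1 h.le
    · exact (hle j i).1 h.ge
    · simp only [hle, ncard_setOf_apply_le hρ]

/-- A bijective ranking `ρ : {1,…,p} → {1,…,p}` (here `ρ : Fin p → Fin p`,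
with the rank of `j` being `(ρ j : ℕ) + 1 ∈ {1,…,p}`) is compatible with the intervals
`I_j = [ℓ j, r j]` (i.e. there is an injective `x` with `x j ∈ I_j` and
`rank of j = #{i : x i ≤ x j}`) if and only if the linear order `≤_ρ` defined by
`j₁ ≤_ρ j₂ ↔ ρ j₁ ≤ ρ j₂` is a linear extension of `≼_I`. -/
theorem ranking_compatible_iff_linear_extension (p : ℕ) (hp : 1 ≤ p)
    (ℓ r : Fin p → ℝ) (hlr : ∀ j, ℓ j < r j)
    (hdist : Function.Injective (Sum.elim ℓ r : Fin p ⊕ Fin p → ℝ))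
    (ρ : Fin p → Fin p) (hρ : Function.Bijective ρ) :
    (∃ x : Fin p → ℝ, Function.Injective x ∧ (∀ j, x j ∈ Set.Icc (ℓ j) (r j)) ∧
        ∀ j : Fin p, (ρ j : ℕ) + 1 = {i : Fin p | x i ≤ x j}.ncard) ↔
      (∀ j₁ j₂ : Fin p, (r j₁ < ℓ j₂ ∨ j₁ = j₂) → ρ j₁ ≤ ρ j₂) :=
  ranking_compatible_iff_linear_extension_general p ℓ r hlr hdist ρ hρ
end

section
/- Let (Ω, 𝓕, P) be a probability space, θ : {1,…,p} → ℝ injective with ranking ρ, L, R : {1,…,p} × Ω → ℝ, and α ∈ [0,1]. For each ω define the strict order ≺_ω on {1,…,p} by j₁ ≺_ω j₂ iff R(j₁,ω) < L(j₂,ω), and let ↓_ω j = { i : i ≺_ω j or i = j }, ↑_ω j = { i : j ≺_ω i or i = j }. Suppose the event A = { ω : ∀ j, L(j,ω) ≤ θ(j) ≤ R(j,ω) } and the event C = { ω : ∀ j, |↓_ω j| ≤ ρ(j) ≤ p + 1 − |↑_ω j| } are measurable and P(A) ≥ 1 − α. Then A ⊆ C and consequently P(C) ≥ 1 − α. -/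
/-- Let `(Ω, 𝓕, P)` be a probability space, `θ : {1,…,p} → ℝ` injective
with ranking `ρ j = #{i : θ i ≤ θ j}`, `L, R : {1,…,p} × Ω → ℝ`, and `α ∈ [0,1]`.
For each `ω` define `j₁ ≺_ω j₂ ↔ R j₁ ω < L j₂ ω`, with
`↓_ω j = {i : i ≺_ω j ∨ i = j}` and `↑_ω j = {i : j ≺_ω i ∨ i = j}`.  Suppose the event
`A = {ω : ∀ j, L j ω ≤ θ j ≤ R j ω}` and the event
`C = {ω : ∀ j, |↓_ω j| ≤ ρ j ≤ p + 1 − |↑_ω j|}` are measurable and `P A ≥ 1 − α`.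
Then `A ⊆ C` and consequently `P C ≥ 1 − α`. -/
theorem index_intervals_confidence_set
    {Ω : Type*} [MeasurableSpace Ω] (P : MeasureTheory.Measure Ω)
    [MeasureTheory.IsProbabilityMeasure P]
    (p : ℕ) (θ : Fin p → ℝ) (hθ : Function.Injective θ)
    (ρ : Fin p → ℕ) (hρ : ∀ j : Fin p, ρ j = {i : Fin p | θ i ≤ θ j}.ncard)
    (L R : Fin p → Ω → ℝ) (α : ℝ) (hα0 : 0 ≤ α) (hα1 : α ≤ 1)
    (A C : Set Ω)
    (hA : A = {ω : Ω | ∀ j : Fin p, L j ω ≤ θ j ∧ θ j ≤ R j ω})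
    (hC : C = {ω : Ω | ∀ j : Fin p,
      {i : Fin p | R i ω < L j ω ∨ i = j}.ncard ≤ ρ j ∧
        ρ j ≤ p + 1 - {i : Fin p | R j ω < L i ω ∨ i = j}.ncard})
    (hAmeas : MeasurableSet A) (hCmeas : MeasurableSet C)
    (hPA : ENNReal.ofReal (1 - α) ≤ P A) :
    A ⊆ C ∧ ENNReal.ofReal (1 - α) ≤ P C := by
  have hsub : A ⊆ C := by
    intro ω hω
    rw [hA] at hω
    rw [hC]
    intro j
    have hsub1 : {i : Fin p | R i ω < L j ω ∨ i = j} ⊆ {i : Fin p | θ i ≤ θ j} := by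
      intro i hi
      simp only [Set.mem_setOf_eq] at hi ⊢
      rcases hi with h | rfl
      · exact le_of_lt (lt_of_le_of_lt (hω i).2 (lt_of_lt_of_le h (hω j).1))
      · exact le_refl _
    have hsub2 : {i : Fin p | R j ω < L i ω ∨ i = j} ⊆ {i : Fin p | θ j ≤ θ i} := by
      intro i hi
      simp only [Set.mem_setOf_eq] at hi ⊢
      rcases hi with h | rfl
      · exact le_of_lt (lt_of_le_of_lt (hω j).2 (lt_of_lt_of_le h (hω i).1))
      · exact le_refl _
    have h1 : {i : Fin p | R i ω < L j ω ∨ i = j}.ncard ≤ ρ j := by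
      rw [hρ j]; exact Set.ncard_le_ncard hsub1 (Set.toFinite _)
    refine ⟨h1, ?_⟩
    have h2 : {i : Fin p | R j ω < L i ω ∨ i = j}.ncard ≤
        {i : Fin p | θ j ≤ θ i}.ncard :=
      Set.ncard_le_ncard hsub2 (Set.toFinite _)
    have hcard : {i : Fin p | θ i ≤ θ j}.ncard + {i : Fin p | θ j ≤ θ i}.ncard
        = p + 1 := by
      have hint : {i : Fin p | θ i ≤ θ j} ∩ {i : Fin p | θ j ≤ θ i} = {j} := by
        ext i
        simp only [Set.mem_inter_iff, Set.mem_setOf_eq, Set.mem_singleton_iff]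
        constructor
        · rintro ⟨h1, h2⟩; exact hθ (le_antisymm h1 h2)
        · rintro rfl; exact ⟨le_refl _, le_refl _⟩
      have huni : {i : Fin p | θ i ≤ θ j} ∪ {i : Fin p | θ j ≤ θ i} = Set.univ := by
        ext i; simp [le_total]
      have := Set.ncard_inter_add_ncard_union {i : Fin p | θ i ≤ θ j}
        {i : Fin p | θ j ≤ θ i} (Set.toFinite _) (Set.toFinite _)
      rw [hint, huni, Set.ncard_singleton, Set.ncard_univ] at this
      simp [Nat.card_eq_fintype_card] at this
      omega
    rw [hρ j] at *
    omega
  exact ⟨hsub, le_trans hPA (MeasureTheory.measure_mono hsub)⟩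
end
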